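/- arXiv:2407.20854 — 3 statements merged into one kernel-verified Lean document; each statement's English description precedes it below -/
import Mathlib

section
/- Every nontrivial irreducible complex character of a finite group of odd order is not real-valued (Burnside). Equivalently, if G has odd order and χ ∈ Irr(G) satisfies χ = χ̄, then χ is the trivial character. -/
/-!
If `χ` is real, then `⟨χ², 1⟩ = ⟨χ, χ̄⟩ = 1`, so the invariants of `V ⊗ V` form a line. The swap of
the two factors commutes with `G` and is an involution, so it acts on this line by a sign `ε`, and
taking the trace of the swap composed with the averaging projection gives
`ε = |G|⁻¹ ∑ χ(g²)`, the Frobenius–Schur indicator. When `|G|` is odd, squaring is a bijection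
of `G`, so `ε = |G|⁻¹ ∑ χ(g) = ⟨χ, 1⟩`, which vanishes unless `χ` is trivial.
-/

open Module TensorProduct

theorem LinearMap.trace_comm_comp_map {R V : Type*} [CommRing R] [AddCommGroup V] [Module R V]
    [Module.Free R V] [Module.Finite R V] (A B : V →ₗ[R] V) :
    trace R (V ⊗[R] V) ((TensorProduct.comm R V V).toLinearMap ∘ₗ TensorProduct.map A B) =
      trace R V (A ∘ₗ B) := by
  classical
  let b := Module.Free.chooseBasis R V
  rw [trace_eq_matrix_trace R (b.tensorProduct b), trace_eq_matrix_trace R b,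
    toMatrix_comp b b b]
  simp only [Matrix.trace, Matrix.diag, Matrix.mul_apply, toMatrix_apply,
    Basis.tensorProduct_apply, comp_apply, LinearEquiv.coe_coe, TensorProduct.map_tmul,
    TensorProduct.comm_tmul, Basis.tensorProduct_repr_tmul_apply, Fintype.sum_prod_type,
    smul_eq_mul]
  exact Finset.sum_comm

theorem LinearMap.IsProj.trace_comp_sq_eq_one {K M : Type*} [Field K] [AddCommGroup M]
    [Module K M] [FiniteDimensional K M] {W : Submodule K M} {P τ : M →ₗ[K] M}
    (hP : IsProj W P) (hW : finrank K W = 1) (hτW : ∀ x ∈ W, τ x ∈ W)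
    (hτ : τ ∘ₗ τ = LinearMap.id) : LinearMap.trace K M (τ ∘ₗ P) ^ 2 = 1 := by
  obtain ⟨c, hc, -⟩ := (τ.restrict hτW).existsUnique_eq_smul_id_of_finrank_eq_one hW
  have hτP : τ ∘ₗ P = c • P := by
    ext x
    simpa using congrArg Subtype.val (LinearMap.congr_fun hc ⟨P x, hP.map_mem x⟩)
  have hc2 : c ^ 2 = 1 := by
    -- `id = c ^ 2 • id` on the line `W`, and the scalar of a homothety of a line is unique
    refine (LinearMap.existsUnique_eq_smul_id_of_finrank_eq_one hW LinearMap.id).unique ?_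
      (one_smul K _).symm
    ext x
    have hx : τ x = c • x := by simpa using congrArg Subtype.val (LinearMap.congr_fun hc x)
    have hττx := LinearMap.congr_fun hτ x
    simp only [comp_apply, hx, map_smul, smul_smul, id_apply] at hττx
    simp [sq, hττx]
  rw [hτP, map_smul, hP.trace, hW, Nat.cast_one, smul_eq_mul, mul_one, hc2]

namespace Representation

section Irreducible

variable {k G V : Type*} [Field k] [AddCommGroup V] [Module k V]

theorem isIrreducible_iff_forall_submodule [Monoid G] (ρ : Representation k G V) :
    IsIrreducible ρ ↔
      Nontrivial V ∧ ∀ U : Submodule k V, (∀ g, ∀ v ∈ U, ρ g v ∈ U) → U = ⊥ ∨ U = ⊤ := by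
  constructor
  · intro h
    refine ⟨?_, fun U hU => ?_⟩
    · by_contra hV
      rw [not_nontrivial_iff_subsingleton] at hV
      exact bot_ne_top (α := Subrepresentation ρ) (Subrepresentation.ext (Subsingleton.elim _ _))
    · exact (h.eq_bot_or_eq_top ⟨U, fun g _ hv => hU g _ hv⟩).imp
        (congrArg Subrepresentation.toSubmodule) (congrArg Subrepresentation.toSubmodule)
  · rintro ⟨hV, h⟩
    exact
      { exists_pair_ne := ⟨⊥, ⊤, fun e => bot_ne_top (congrArg Subrepresentation.toSubmodule e)⟩
        eq_bot_or_eq_top := fun U =>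
          (h U.toSubmodule fun g _ hv => U.apply_mem_toSubmodule g hv).imp
            Subrepresentation.ext Subrepresentation.ext }

variable [Group G] {ρ : Representation k G V}

theorem apply_mem_dualCoannihilator {U : Submodule k (Module.Dual k V)}
    (hU : ∀ g, ∀ φ ∈ U, ρ.dual g φ ∈ U) (g : G) {v : V} (hv : v ∈ U.dualCoannihilator) :
    ρ g v ∈ U.dualCoannihilator := by
  rw [Submodule.mem_dualCoannihilator] at hv ⊢
  intro φ hφ
  simpa [Representation.dual_apply, Module.Dual.transpose] using hv _ (hU g⁻¹ φ hφ)

instance IsIrreducible.dual [FiniteDimensional k V] [IsIrreducible ρ] : IsIrreducible ρ.dual := by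
  obtain ⟨hV, hirr⟩ := (isIrreducible_iff_forall_submodule ρ).1 ‹_›
  refine (isIrreducible_iff_forall_submodule _).2 ⟨?_, fun U hU => ?_⟩
  · exact Module.nontrivial_of_finrank_pos (R := k)
      (by rw [Subspace.dual_finrank_eq]; exact Module.finrank_pos)
  · have hdim := Subspace.finrank_add_finrank_dualCoannihilator_eq U
    rcases hirr _ (fun g _ hv => apply_mem_dualCoannihilator hU g hv) with h | h
    · right
      rw [h, finrank_bot, add_zero] at hdim
      exact Submodule.eq_top_of_finrank_eq (by rw [hdim, Subspace.dual_finrank_eq])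
    · left
      rw [h, finrank_top, Subspace.dual_finrank_eq.symm] at hdim
      exact Submodule.finrank_eq_zero.1 (by omega)

theorem IsIrreducible.character_eq_one_of_invariants_ne_bot [FiniteDimensional k V]
    [IsIrreducible ρ] (h : ρ.invariants ≠ ⊥) : ρ.character = 1 := by
  obtain ⟨hV, hirr⟩ := (isIrreducible_iff_forall_submodule ρ).1 ‹_›
  have htop : ρ.invariants = ⊤ :=
    (hirr _ fun g v hv => by rw [hv g]; exact hv).resolve_left h
  have hfix (g : G) (v : V) : ρ g v = v := (htop ▸ Submodule.mem_top : v ∈ ρ.invariants) g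
  obtain ⟨v, hv⟩ := exists_ne (0 : V)
  have hspan : Submodule.span k {v} = ⊤ :=
    (hirr _ fun g w _ => by rwa [hfix]).resolve_left (by simpa using hv)
  have hrank : finrank k V = 1 := (finrank_eq_one_iff_of_nonzero v hv).2 hspan
  have hρ (g : G) : ρ g = 1 := LinearMap.ext (hfix g)
  ext g
  simp [character, hρ, LinearMap.trace_one, hrank]

theorem IsIrreducible.sum_character_eq_zero_or_character_eq_one [Fintype G]
    [Invertible (Nat.card G : k)] [FiniteDimensional k V] [IsIrreducible ρ] :
    ∑ g : G, ρ.character g = 0 ∨ ρ.character = 1 := by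
  by_cases h : ρ.invariants = ⊥
  · have hinv := card_inv_mul_sum_char_eq_finrank ρ
    rw [h, finrank_bot, Nat.cast_zero] at hinv
    exact .inl ((mul_eq_zero.1 hinv).resolve_left (inv_ne_zero (Invertible.ne_zero _)))
  · exact .inr (character_eq_one_of_invariants_ne_bot h)

end Irreducible

section FrobeniusSchur

variable {k G V : Type*} [Field k] [Group G] [Fintype G] [AddCommGroup V] [Module k V]
  [FiniteDimensional k V] (ρ : Representation k G V)

noncomputable def frobeniusSchurIndicator : k :=
  (Nat.card G : k)⁻¹ * ∑ g : G, ρ.character (g ^ 2)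

theorem trace_comm_comp_averageMap_tprod [Invertible (Fintype.card G : k)] :
    LinearMap.trace k (V ⊗[k] V)
        ((_root_.TensorProduct.comm k V V).toLinearMap ∘ₗ (tprod ρ ρ).averageMap) =
      ρ.frobeniusSchurIndicator := by
  have havg : (tprod ρ ρ).averageMap =
      ⅟(Fintype.card G : k) • ∑ g : G, TensorProduct.map (ρ g) (ρ g) := by
    rw [averageMap, GroupAlgebra.average]
    simp only [map_smul, map_sum, MonoidAlgebra.of_apply, asAlgebraHom_single, one_smul,
      tprod_apply]
  rw [havg, ← Module.End.mul_eq_comp, mul_smul_comm, Finset.mul_sum, map_smul, map_sum]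
  simp_rw [Module.End.mul_eq_comp, LinearMap.trace_comm_comp_map, ← Module.End.mul_eq_comp,
    ← map_mul, ← sq]
  rw [frobeniusSchurIndicator, invOf_eq_inv, smul_eq_mul, Nat.card_eq_fintype_card]
  rfl

theorem frobeniusSchurIndicator_sq_eq_one [Invertible (Fintype.card G : k)]
    (h : finrank k (tprod ρ ρ).invariants = 1) : ρ.frobeniusSchurIndicator ^ 2 = 1 := by
  rw [← trace_comm_comp_averageMap_tprod]
  refine (isProj_averageMap _).trace_comp_sq_eq_one h (fun x hx g => ?_) ?_
  · rw [tprod_apply, LinearEquiv.coe_coe, TensorProduct.map_comm, ← tprod_apply, hx g]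
  · exact TensorProduct.ext' fun _ _ => rfl

theorem finrank_invariants_tprod_self_eq_one [IsAlgClosed k] [CharZero k] [IsIrreducible ρ]
    (h : ∑ g : G, ρ.character g * ρ.character g ≠ 0) :
    finrank k (tprod ρ ρ).invariants = 1 := by
  have : Invertible (Nat.card G : k) := invertibleOfNonzero (Nat.cast_ne_zero.2 Nat.card_pos.ne')
  have hinv := card_inv_mul_sum_char_eq_finrank (tprod ρ ρ)
  have horth := char_orthonormal ρ ρ.dual
  simp only [char_tensor, Pi.mul_apply] at hinv
  simp only [char_dual, inv_inv] at horth
  split_ifs at horth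
  · exact_mod_cast hinv.symm.trans horth
  · exact absurd horth (mul_ne_zero (inv_ne_zero (Invertible.ne_zero _)) h)

end FrobeniusSchur

end Representation

theorem Complex.sum_mul_self_ne_zero_of_conj_eq {ι : Type*} [Fintype ι] {f : ι → ℂ}
    (hf : ∀ i, (starRingEnd ℂ) (f i) = f i) (i : ι) (hi : f i ≠ 0) :
    ∑ j, f j * f j ≠ 0 := by
  have hre (j : ι) : ((f j).re : ℂ) = f j := Complex.conj_eq_iff_re.1 (hf j)
  have hsum : ∑ j, f j * f j = ((∑ j, (f j).re * (f j).re : ℝ) : ℂ) := by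
    push_cast
    simp only [hre]
  rw [hsum, Complex.ofReal_ne_zero, Ne, Finset.sum_mul_self_eq_zero_iff]
  exact fun h0 => hi (by rw [← hre i, h0 i (Finset.mem_univ i), Complex.ofReal_zero])

theorem Fintype.sum_sq_eq_sum_of_odd_card {G M : Type*} [Group G] [Fintype G]
    [AddCommMonoid M] (hodd : Odd (Nat.card G)) (f : G → M) :
    ∑ g, f (g ^ 2) = ∑ g, f g :=
  (powCoprime hodd.coprime_two_right).sum_comp f

/-- Burnside: every nontrivial irreducible complex character of a finite group of odd
order is not real-valued. Equivalently, if the character `χ` of an irreducible complex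
representation of a group `G` of odd order is real-valued, then `χ` is the trivial
character. -/
theorem stmt_3 (G : Type) [Group G] [Finite G] (hodd : Odd (Nat.card G))
    (V : Type) [AddCommGroup V] [Module ℂ V] [FiniteDimensional ℂ V] [Nontrivial V]
    (ρ : Representation ℂ G V)
    (hirr : ∀ U : Submodule ℂ V, (∀ g : G, ∀ v ∈ U, ρ g v ∈ U) → U = ⊥ ∨ U = ⊤)
    (χ : G → ℂ) (hχ : ∀ g, χ g = LinearMap.trace ℂ V (ρ g))
    (hreal : ∀ g, (starRingEnd ℂ) (χ g) = χ g) :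
    ∀ g, χ g = 1 := by
  have : Fintype G := Fintype.ofFinite G
  have : Invertible (Nat.card G : ℂ) := invertibleOfNonzero (Nat.cast_ne_zero.2 Nat.card_pos.ne')
  have : Invertible (Fintype.card G : ℂ) :=
    invertibleOfNonzero (Nat.cast_ne_zero.2 Fintype.card_ne_zero)
  have : ρ.IsIrreducible := (ρ.isIrreducible_iff_forall_submodule).2 ⟨‹_›, hirr⟩
  obtain rfl : χ = ρ.character := funext hχ
  rcases Representation.IsIrreducible.sum_character_eq_zero_or_character_eq_one (ρ := ρ)
    with hsum | htriv
  · have hsq : ∑ g, ρ.character g * ρ.character g ≠ 0 :=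
      Complex.sum_mul_self_ne_zero_of_conj_eq hreal 1 (by simp [Module.finrank_pos.ne'])
    have hν := ρ.frobeniusSchurIndicator_sq_eq_one (ρ.finrank_invariants_tprod_self_eq_one hsq)
    rw [Representation.frobeniusSchurIndicator, Fintype.sum_sq_eq_sum_of_odd_card hodd, hsum] at hν
    simp at hν
  · exact congrFun htriv
end

section
/- Let H be a group of order 24 isomorphic to SL₂(3) acting faithfully on a finite vector space V over 𝔽_p (p odd) of even dimension n. Suppose each of the 4 Sylow 3-subgroups of H has fixed-point space of dimension at most n/2, and pairwise these fixed spaces intersect trivially. If pⁿ − 4·p^{⌊n/2⌋} − 21 > 0, then H has at least two regular orbits on V. -/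
/-!
The central element `z = -1` of `SL₂(3)` acts as an involution `≠ 1`, so in odd characteristic
`V` contains the `±1`-eigenspaces of `ρ z` as independent subspaces. The `(-1)`-eigenspace is
`H`-stable, and it cannot be a line: `z` is a commutator, and commutators act trivially on an
`H`-stable line. Hence `z` fixes at most `p^(n-2)` vectors. A non-regular vector is fixed by an
element of prime order, that is by `z` or by one of the at most four Sylow 3-subgroups, so at most
`p^(n-2) + 4 p^(n/2)` vectors are non-regular. The arithmetic hypothesis leaves more than
`24 = |H|` regular vectors, too many for a single orbit.
-/

open Module
open scoped commutatorElement MatrixGroups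

namespace Matrix.SpecialLinearGroup

theorem eq_one_or_eq_neg_one_of_mul_self_zmod_three :
    ∀ g : SL(2, ZMod 3), g * g = 1 → g = 1 ∨ g = -1 := by
  decide

theorem exists_commutatorElement_eq_neg_one_zmod_three :
    ∃ a b : SL(2, ZMod 3), ⁅a, b⁆ = -1 := by
  decide

theorem orderOf_neg_one_zmod_three : orderOf (-1 : SL(2, ZMod 3)) = 2 :=
  orderOf_eq_prime (by decide) (by decide)

end Matrix.SpecialLinearGroup

open Matrix.SpecialLinearGroup in
theorem exists_central_involution_of_mulEquiv_SL2_ZMod3 {H : Type*} [Group H]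
    (e : H ≃* SL(2, ZMod 3)) :
    ∃ z : H, orderOf z = 2 ∧ (∀ g, Commute g z) ∧ (∃ a b : H, ⁅a, b⁆ = z) ∧
      ∀ g, orderOf g = 2 → g = z := by
  refine ⟨e.symm (-1), by rw [MulEquiv.orderOf_eq, orderOf_neg_one_zmod_three], fun g => ?_, ?_,
    fun g hg => ?_⟩
  · simpa using (Commute.neg_one_right (e g)).map e.symm
  · obtain ⟨a, b, hab⟩ := exists_commutatorElement_eq_neg_one_zmod_three
    exact ⟨e.symm a, e.symm b, by rw [← map_commutatorElement, hab]⟩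
  · rw [← MulEquiv.orderOf_eq e] at hg
    have hsq : e g * e g = 1 := by simpa [sq, hg] using pow_orderOf_eq_one (e g)
    rcases eq_one_or_eq_neg_one_of_mul_self_zmod_three _ hsq with h | h
    · simp [h] at hg
    · rw [← h, MulEquiv.symm_apply_apply]

section LinearAlgebra

variable {K V : Type*} [Field K] [AddCommGroup V] [Module K V]

theorem Module.End.eigenspace_neg_one_ne_bot {f : End K V} (hf : f * f = 1) (hf1 : f ≠ 1) :
    f.eigenspace (-1) ≠ ⊥ := by
  obtain ⟨v, hv⟩ : ∃ v, f v ≠ v := by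
    by_contra! h
    exact hf1 (LinearMap.ext h)
  refine Submodule.ne_bot_iff _ |>.mpr ⟨v - f v, ?_, sub_ne_zero.mpr hv.symm⟩
  rw [End.mem_eigenspace_iff, map_sub, ← End.mul_apply, hf]
  simp

theorem Module.End.mapsTo_eigenspace_of_commute {f g : End K V} (h : Commute f g) (μ : K) :
    Set.MapsTo g (f.eigenspace μ) (f.eigenspace μ) := by
  intro x hx
  simp only [SetLike.mem_coe, End.mem_eigenspace_iff] at hx ⊢
  rw [← End.mul_apply, h.eq, End.mul_apply, hx, map_smul]

theorem Module.End.finrank_eigenspace_one_add_finrank_eigenspace_neg_one_le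
    [FiniteDimensional K V] (h2 : (2 : K) ≠ 0) (f : End K V) :
    finrank K (f.eigenspace 1) + finrank K (f.eigenspace (-1)) ≤ finrank K V := by
  have hne : (1 : K) ≠ -1 := fun h => h2 (by linear_combination h)
  have hdisj := (f.disjoint_genEigenspace hne 1 1).eq_bot
  have := Submodule.finrank_sup_add_finrank_inf_eq (f.eigenspace 1) (f.eigenspace (-1))
  rw [hdisj, finrank_bot, add_zero] at this
  exact this ▸ Submodule.finrank_le _

variable {H : Type*} [Group H] (ρ : H →* (V →ₗ[K] V)ˣ)

/-- `H` acts on the line `K ∙ x` through scalars, and scalars commute. -/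
theorem commutatorElement_apply_eq_self_of_mem_span {x : V}
    (hx : ∀ g, (ρ g : End K V) x ∈ K ∙ x) (a b : H) : (ρ ⁅a, b⁆ : End K V) x = x := by
  choose c hc using fun g => Submodule.mem_span_singleton.mp (hx g)
  have hinv : ∀ g, (c g * c g⁻¹) • x = x := fun g => by
    rw [mul_smul, hc, ← map_smul, hc, ← End.mul_apply, ← Units.val_mul, ← map_mul,
      inv_mul_cancel, map_one, Units.val_one, End.one_apply]
  calc (ρ ⁅a, b⁆ : End K V) x = (c a * c a⁻¹) • (c b * c b⁻¹) • x := by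
        simp only [commutatorElement_def, map_mul, Units.val_mul, End.mul_apply, ← hc,
          map_smul, smul_smul]
        ring_nf
    _ = x := by rw [hinv, hinv]

theorem two_le_finrank_eigenspace_neg_one [FiniteDimensional K V] (h2 : (2 : K) ≠ 0) {z a b : H}
    (hz : ∀ g, Commute g z) (hab : ⁅a, b⁆ = z) (hzz : z * z = 1) (hρz : ρ z ≠ 1) :
    2 ≤ finrank K (End.eigenspace (ρ z : End K V) (-1)) := by
  set W := End.eigenspace (ρ z : End K V) (-1)
  have hW : W ≠ ⊥ := End.eigenspace_neg_one_ne_bot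
    (by rw [← Units.val_mul, ← map_mul, hzz, map_one, Units.val_one])
    (fun h => hρz (Units.ext h))
  obtain ⟨x, hxW, hx0⟩ := Submodule.exists_mem_ne_zero_of_ne_bot hW
  by_contra! hlt
  have hline : K ∙ x = W := Submodule.eq_of_le_of_finrank_le
    ((Submodule.span_singleton_le_iff_mem _ _).mpr hxW) (by rw [finrank_span_singleton hx0]; omega)
  have hfix := commutatorElement_apply_eq_self_of_mem_span ρ (x := x) (fun g => hline ▸
    End.mapsTo_eigenspace_of_commute (((hz g).map ρ).units_val.symm) _ hxW) a b
  rw [hab, (End.mem_eigenspace_iff.mp hxW)] at hfix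
  have h2x : (2 : K) • x = 0 := by
    rw [show (2 : K) = 1 - (-1) by ring, sub_smul, one_smul, hfix, sub_self]
  exact hx0 ((smul_eq_zero.mp h2x).resolve_left h2)

theorem finrank_eigenspace_one_add_two_le [FiniteDimensional K V] (h2 : (2 : K) ≠ 0) {z a b : H}
    (hz : ∀ g, Commute g z) (hab : ⁅a, b⁆ = z) (hzz : z * z = 1) (hρz : ρ z ≠ 1) :
    finrank K (End.eigenspace (ρ z : End K V) 1) + 2 ≤ finrank K V :=
  (Nat.add_le_add_left (two_le_finrank_eigenspace_neg_one ρ h2 hz hab hzz hρz) _).trans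
    (End.finrank_eigenspace_one_add_finrank_eigenspace_neg_one_le h2 _)

theorem ncard_setOf_apply_eq_self [Finite V] (f : End K V) :
    {v | f v = v}.ncard = Nat.card K ^ finrank K (f.eigenspace 1) := by
  have : Module.Finite K V := Module.Finite.of_finite
  simp_rw [← Module.natCard_eq_pow_finrank, ← Nat.card_coe_set_eq]
  congr! 2
  ext v
  simp

end LinearAlgebra

section GroupTheory

variable {G : Type*} [Group G]

theorem Subgroup.exists_prime_orderOf_mem [Finite G] {S : Subgroup G} (hS : S ≠ ⊥) :
    ∃ g ∈ S, (orderOf g).Prime := by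
  obtain ⟨q, hq, hqS⟩ := Nat.exists_prime_and_dvd (mt Subgroup.card_eq_one.mp hS)
  have : Fact q.Prime := ⟨hq⟩
  obtain ⟨g, hg⟩ := exists_prime_orderOf_dvd_card' q hqS
  exact ⟨g, g.2, by rwa [Subgroup.orderOf_coe, hg]⟩

theorem exists_sylow_eq_zpowers [Finite G] {q : ℕ} [Fact q.Prime] (hq : ¬q ^ 2 ∣ Nat.card G)
    {g : G} (hg : orderOf g = q) : ∃ P : Sylow q G, (P : Subgroup G) = Subgroup.zpowers g := by
  have hcard : Nat.card (Subgroup.zpowers g) = q ^ 1 := by rw [Nat.card_zpowers, hg, pow_one]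
  obtain ⟨P, hP⟩ := (IsPGroup.of_card hcard).exists_le_sylow
  obtain ⟨k, hk⟩ := IsPGroup.iff_card.mp P.isPGroup'
  have hk1 : k ≤ 1 := by
    by_contra! h2
    exact hq ((pow_dvd_pow q h2).trans (hk ▸ Subgroup.card_subgroup_dvd_card (P : Subgroup G)))
  refine ⟨P, (Subgroup.eq_of_le_of_card_ge hP ?_).symm⟩
  rw [hk, hcard]
  exact Nat.pow_le_pow_right (Fact.out : q.Prime).pos hk1

theorem card_sylow_three_le_four_of_card_eq_24 [Finite G] (hG : Nat.card G = 24) :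
    Nat.card (Sylow 3 G) ≤ 4 := by
  obtain ⟨P⟩ : Nonempty (Sylow 3 G) := inferInstance
  have hdvd : Nat.card (Sylow 3 G) ∣ 24 :=
    hG ▸ P.card_dvd_index.trans (Subgroup.index_dvd_card _)
  have hmod : Nat.card (Sylow 3 G) % 3 = 1 := card_sylow_modEq_one 3 G
  generalize Nat.card (Sylow 3 G) = N at hdvd hmod
  have := Nat.le_of_dvd (by norm_num) hdvd
  interval_cases N <;> omega

theorem orderOf_eq_two_or_three_of_card_eq_24 (hG : Nat.card G = 24) {g : G}
    (hg : (orderOf g).Prime) : orderOf g = 2 ∨ orderOf g = 3 := by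
  have hdvd : orderOf g ∣ 24 := hG ▸ orderOf_dvd_natCard g
  generalize orderOf g = q at hg hdvd
  have := Nat.le_of_dvd (by norm_num) hdvd
  interval_cases q <;> first | omega | norm_num at hg

end GroupTheory

section RegularOrbits

variable {K V H : Type*} [Field K] [AddCommGroup V] [Module K V] [Group H] [Finite H]
  (ρ : H →* (V →ₗ[K] V)ˣ)

/-- A nontrivial stabilizer contains an element of prime order: either `z`, or an element of
order 3, which generates a Sylow 3-subgroup. -/
theorem compl_setOf_regular_subset (hH : Nat.card H = 24) {z : H}
    (hz : ∀ g, orderOf g = 2 → g = z) :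
    {v : V | ∀ h, (ρ h).val v = v → h = 1}ᶜ ⊆ {v | (ρ z).val v = v} ∪
      ⋃ P : Sylow 3 H, {v | ∀ h ∈ (P : Subgroup H), (ρ h).val v = v} := by
  intro v hv
  obtain ⟨h, hfix, hne⟩ : ∃ h, (ρ h).val v = v ∧ h ≠ 1 := by simpa using hv
  set S := (MulAction.stabilizer (V →ₗ[K] V)ˣ v).comap ρ
  have hS : S ≠ ⊥ :=
    Subgroup.ne_bot_iff_exists_ne_one.mpr ⟨⟨h, hfix⟩, fun h1 => hne congr(Subtype.val $h1)⟩
  obtain ⟨g, hgS, hg⟩ := S.exists_prime_orderOf_mem hS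
  rcases orderOf_eq_two_or_three_of_card_eq_24 hH hg with h2 | h3
  · exact Or.inl (hz g h2 ▸ hgS)
  · obtain ⟨P, hP⟩ := exists_sylow_eq_zpowers (by rw [hH]; decide) h3
    refine Or.inr (Set.mem_iUnion.mpr ⟨P, fun k hk => ?_⟩)
    exact Subgroup.zpowers_le.mpr hgS (hP ▸ hk)

theorem ncard_compl_setOf_regular_le [Finite V] (hH : Nat.card H = 24) {z : H}
    (hz : ∀ g, orderOf g = 2 → g = z) {B : ℕ}
    (hB : ∀ P : Sylow 3 H, {v : V | ∀ h ∈ (P : Subgroup H), (ρ h).val v = v}.ncard ≤ B) :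
    {v : V | ∀ h, (ρ h).val v = v → h = 1}ᶜ.ncard ≤
      Nat.card K ^ finrank K (End.eigenspace (ρ z : End K V) 1) + 4 * B := by
  have := Fintype.ofFinite (Sylow 3 H)
  calc _ ≤ {v | (ρ z).val v = v}.ncard +
        ∑ P : Sylow 3 H, {v : V | ∀ h ∈ (P : Subgroup H), (ρ h).val v = v}.ncard :=
      (Set.ncard_le_ncard (compl_setOf_regular_subset ρ hH hz)).trans
        ((Set.ncard_union_le _ _).trans (Nat.add_le_add_left (Set.ncard_iUnion_le_of_fintype _) _))
    _ ≤ _ := by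
      rw [ncard_setOf_apply_eq_self]
      gcongr
      calc _ ≤ Fintype.card (Sylow 3 H) * B := by
            simpa using Finset.sum_le_card_nsmul Finset.univ _ B fun P _ => hB P
        _ ≤ 4 * B := by
          gcongr
          exact Nat.card_eq_fintype_card (α := Sylow 3 H) ▸
            card_sylow_three_le_four_of_card_eq_24 hH

end RegularOrbits

theorem pow_add_four_mul_pow_div_two_add_lt_pow {p n k : ℕ} (hp : 3 ≤ p) (hk : k + 2 ≤ n)
    (h : 4 * p ^ (n / 2) + 21 < p ^ n) : p ^ k + 4 * p ^ (n / 2) + 24 < p ^ n := by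
  obtain ⟨m, rfl⟩ : ∃ m, n = m + 2 := ⟨n - 2, by omega⟩
  have hkm : p ^ k ≤ p ^ m := Nat.pow_le_pow_right (by omega) (by omega)
  rcases m with _ | _ | m
  · norm_num at h hkm ⊢
    have hp8 : 8 ≤ p := by nlinarith
    nlinarith
  · have hp4 : 4 ≤ p := by
      by_contra! hp4
      obtain rfl : p = 3 := by omega
      norm_num at h
    norm_num at h hkm ⊢
    have : 4 * 4 * p ≤ p ^ 3 :=
      (Nat.mul_le_mul (Nat.mul_le_mul hp4 hp4) le_rfl).trans_eq (by ring)
    omega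
  · have hhalf : p ^ ((m + 2 + 2) / 2) ≤ p ^ (m + 2) :=
      Nat.pow_le_pow_right (by omega) (by omega)
    have hsq : 9 ≤ p ^ 2 := Nat.pow_le_pow_left hp 2
    have hm9 : 9 ≤ p ^ (m + 2) := hsq.trans (Nat.pow_le_pow_right (by omega) (by omega))
    rw [pow_add _ (m + 2) 2]
    nlinarith

theorem exists_forall_ne_of_card_lt_ncard {G α : Type*} [Finite G] (act : G → α → α)
    {S : Set α} (hS : Nat.card G < S.ncard) : ∃ v ∈ S, ∃ w ∈ S, ∀ g, act g v ≠ w := by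
  obtain ⟨v, hv⟩ := Set.nonempty_of_ncard_ne_zero (by omega : S.ncard ≠ 0)
  have hrange : (Set.range (act · v)).ncard ≤ Nat.card G := Finite.card_range_le _
  obtain ⟨w, hwS, hw⟩ := Set.not_subset.mp fun hsub =>
    (Set.ncard_le_ncard hsub (Set.finite_range _)).not_gt (hrange.trans_lt hS)
  exact ⟨v, hv, w, hwS, fun g hg => hw ⟨g, hg⟩⟩

theorem stmt_10_general (H : Type) [Group H] [Finite H] (hcard : Nat.card H = 24)
    (hiso : Nonempty (H ≃* Matrix.SpecialLinearGroup (Fin 2) (ZMod 3)))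
    (p : ℕ) (hp : p.Prime) (hpodd : Odd p)
    (V : Type) [AddCommGroup V] [Module (ZMod p) V] [Finite V]
    (n : ℕ) (hn : Module.finrank (ZMod p) V = n)
    (ρ : H →* (V →ₗ[ZMod p] V)ˣ) (hfaith : Function.Injective ρ)
    (hsylfix : ∀ P : Sylow 3 H,
      Set.ncard {v : V | ∀ h ∈ (P : Subgroup H), (ρ h).val v = v} ≤ p ^ (n / 2))
    (harith : 4 * p ^ (n / 2) + 21 < p ^ n) :
    ∃ v w : V, (∀ h : H, (ρ h).val v = v → h = 1) ∧
      (∀ h : H, (ρ h).val w = w → h = 1) ∧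
      ∀ h : H, (ρ h).val v ≠ w := by
  obtain ⟨e⟩ := hiso
  have : Fact p.Prime := ⟨hp⟩
  have hp3 : 3 ≤ p := by have := hp.two_le; have := Nat.odd_iff.mp hpodd; omega
  have h2 : (2 : ZMod p) ≠ 0 := Ring.two_ne_zero (by rw [ZMod.ringChar_zmod_n]; omega)
  obtain ⟨z, hz2, hzc, ⟨a, b, hab⟩, hz⟩ := exists_central_involution_of_mulEquiv_SL2_ZMod3 e
  have hzz : z * z = 1 := by rw [← sq, ← hz2, pow_orderOf_eq_one]
  have hρz : ρ z ≠ 1 := fun h => by simp [hfaith (h.trans (map_one ρ).symm)] at hz2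
  have hdim := hn ▸ finrank_eigenspace_one_add_two_le ρ h2 hzc hab hzz hρz
  have hbad := ncard_compl_setOf_regular_le ρ hcard hz hsylfix
  have hreg : Nat.card H < {v : V | ∀ h, (ρ h).val v = v → h = 1}.ncard := by
    have htot := Set.ncard_add_ncard_compl {v : V | ∀ h, (ρ h).val v = v → h = 1}
    rw [Module.natCard_eq_pow_finrank (K := ZMod p), hn] at htot
    rw [Nat.card_zmod] at hbad htot
    have := pow_add_four_mul_pow_div_two_add_lt_pow hp3 hdim harith
    omega
  obtain ⟨v, hv, w, hw, hvw⟩ :=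
    exists_forall_ne_of_card_lt_ncard (fun h (v : V) => (ρ h).val v) hreg
  exact ⟨v, w, hv, hw, hvw⟩

/-- Let `H ≅ SL₂(3)` (of order 24) act faithfully and linearly on a finite vector space
`V` over `𝔽_p` (`p` odd prime) of even dimension `n`, in such a way that each Sylow
3-subgroup fixes at most `p^(n/2)` vectors (a subspace of dimension at most `n/2`) and
the fixed spaces of distinct Sylow 3-subgroups intersect trivially. If
`p^n - 4 p^(n/2) - 21 > 0`, then `H` has at least two regular orbits on `V`. -/
theorem stmt_10 (H : Type) [Group H] [Finite H] (hcard : Nat.card H = 24)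
    (hiso : Nonempty (H ≃* Matrix.SpecialLinearGroup (Fin 2) (ZMod 3)))
    (p : ℕ) (hp : p.Prime) (hpodd : Odd p)
    (V : Type) [AddCommGroup V] [Module (ZMod p) V] [Finite V]
    (n : ℕ) (hn : Module.finrank (ZMod p) V = n) (hneven : Even n)
    (ρ : H →* (V →ₗ[ZMod p] V)ˣ) (hfaith : Function.Injective ρ)
    (hsylfix : ∀ P : Sylow 3 H,
      Set.ncard {v : V | ∀ h ∈ (P : Subgroup H), (ρ h).val v = v} ≤ p ^ (n / 2))
    (hsylint : ∀ P Q : Sylow 3 H, P ≠ Q →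
      {v : V | ∀ h ∈ (P : Subgroup H), (ρ h).val v = v} ∩
        {v : V | ∀ h ∈ (Q : Subgroup H), (ρ h).val v = v} ⊆ {0})
    (harith : 4 * p ^ (n / 2) + 21 < p ^ n) :
    ∃ v w : V, (∀ h : H, (ρ h).val v = v → h = 1) ∧
      (∀ h : H, (ρ h).val w = w → h = 1) ∧
      ∀ h : H, (ρ h).val v ≠ w :=
  stmt_10_general H hcard hiso p hp hpodd V n hn ρ hfaith hsylfix harith
end

section
/- Let G be a finite group acting linearly and faithfully on a finite 𝔽_p-vector space M of dimension n, and let P be a set of representatives of the cyclic subgroups of prime order of G. If for every g ∈ P the fixed space Fix_M(g) has 𝔽_p-dimension at most n(1 − 1/r) for a fixed r ≥ 2, then the number R of regular G-orbits on M satisfies |G|·R ≥ pⁿ − |P|·p^{n(1−1/r)}. -/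
/-!
A point of `M` either has trivial stabilizer or is fixed by a nontrivial element `g`; in the
latter case a suitable power of `g` has prime order, and the chosen generator `h ∈ P` of the
cyclic group it spans also fixes the point. Hence `M` is covered by the regular points and the
fixed spaces `Fix_M(h)`, `h ∈ P`. The regular points lie in the regular orbits, each of size at
most `|G|`, so `pⁿ = |M| ≤ |G| R + ∑_{h ∈ P} |Fix_M(h)|`.
-/

def CoversPrimeOrderSubgroups {G : Type*} [Group G] (P : Set G) : Prop :=
  ∀ g : G, (∃ q : ℕ, q.Prime ∧ orderOf g = q) →
    ∃ h ∈ P, Subgroup.zpowers h = Subgroup.zpowers g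

theorem CoversPrimeOrderSubgroups.exists_mem_subgroup {G : Type*} [Group G] {P : Set G}
    (hP : CoversPrimeOrderSubgroups P) {H : Subgroup G} {g : G} (hgH : g ∈ H)
    (hg : IsOfFinOrder g) (hg1 : g ≠ 1) :
    ∃ h ∈ P, h ∈ H := by
  obtain ⟨q, hq, hqg⟩ := (orderOf g).exists_prime_and_dvd (mt orderOf_eq_one_iff.mp hg1)
  -- `g ^ (|g| / q)` has prime order `q`, so some element of `P` generates the same cyclic group.
  obtain ⟨h, hP, hzpowers⟩ :=
    hP (g ^ (orderOf g / q)) ⟨q, hq, orderOf_pow_orderOf_div hg.orderOf_pos.ne' hqg⟩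
  refine ⟨h, hP, Subgroup.zpowers_le.mp ?_⟩
  rw [hzpowers, Subgroup.zpowers_le]
  exact pow_mem hgH _

namespace MulAction

variable (G α : Type*) [Group G] [MulAction G α]

def regularPoints : Set α := {v | ∀ g : G, g • v = v → g = 1}

def regularOrbits : Set (Set α) := {O | ∃ v ∈ regularPoints G α, O = orbit G v}

variable {G α}

theorem ncard_regularPoints_le [Finite G] [Finite α] :
    (regularPoints G α).ncard ≤ Nat.card G * (regularOrbits G α).ncard := by
  have hfin : (regularOrbits G α).Finite := Set.toFinite _
  have hcover : regularPoints G α ⊆ ⋃ O ∈ hfin.toFinset, O := fun v hv =>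
    Set.mem_biUnion (hfin.mem_toFinset.mpr ⟨v, hv, rfl⟩) (mem_orbit_self v)
  have horbit : ∀ O ∈ hfin.toFinset, O.ncard ≤ Nat.card G := by
    rintro O hO
    obtain ⟨v, -, rfl⟩ := hfin.mem_toFinset.mp hO
    exact Finite.card_range_le _
  calc (regularPoints G α).ncard ≤ (⋃ O ∈ hfin.toFinset, O).ncard :=
        Set.ncard_le_ncard hcover
    _ ≤ ∑ O ∈ hfin.toFinset, O.ncard := Finset.set_ncard_biUnion_le _ _
    _ ≤ hfin.toFinset.card * Nat.card G := Finset.sum_le_card_nsmul _ _ _ horbit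
    _ = Nat.card G * (regularOrbits G α).ncard := by
        rw [mul_comm, Set.ncard_eq_toFinset_card _ hfin]

theorem exists_mem_fixedBy_of_notMem_regularPoints [Finite G] {P : Set G}
    (hP : CoversPrimeOrderSubgroups P)
    {v : α} (hv : v ∉ regularPoints G α) : ∃ g ∈ P, v ∈ fixedBy α g := by
  obtain ⟨g, hgv, hg1⟩ : ∃ g : G, g • v = v ∧ g ≠ 1 := by simpa [regularPoints] using hv
  exact hP.exists_mem_subgroup (H := stabilizer G v) hgv
    (isOfFinOrder_of_finite g) hg1

theorem card_le_ncard_regularPoints_add_sum_ncard_fixedBy [Finite G] [Finite α] {P : Finset G}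
    (hP : CoversPrimeOrderSubgroups (P : Set G)) :
    Nat.card α ≤ (regularPoints G α).ncard + ∑ g ∈ P, (fixedBy α g).ncard := by
  have hcover : Set.univ ⊆ regularPoints G α ∪ ⋃ g ∈ P, fixedBy α g := by
    intro v _
    by_cases hv : v ∈ regularPoints G α
    · exact Or.inl hv
    · obtain ⟨g, hg, hgv⟩ := exists_mem_fixedBy_of_notMem_regularPoints hP hv
      exact Or.inr (Set.mem_biUnion hg hgv)
  calc Nat.card α = (Set.univ : Set α).ncard := (Set.ncard_univ α).symm
    _ ≤ (regularPoints G α ∪ ⋃ g ∈ P, fixedBy α g).ncard := Set.ncard_le_ncard hcover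
    _ ≤ (regularPoints G α).ncard + (⋃ g ∈ P, fixedBy α g).ncard := Set.ncard_union_le _ _
    _ ≤ _ := Nat.add_le_add_left (Finset.set_ncard_biUnion_le _ _) _

end MulAction

open MulAction in
theorem stmt_14_general (G : Type) [Group G] [Finite G]
    (p : ℕ) (hp : p.Prime)
    (M : Type) [AddCommGroup M] [Module (ZMod p) M] [Finite M]
    (n : ℕ) (hn : Module.finrank (ZMod p) M = n)
    (ρ : G →* (M →ₗ[ZMod p] M)ˣ)
    (P : Finset G)
    (hP : ∀ g : G, (∃ q : ℕ, q.Prime ∧ orderOf g = q) →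
      ∃ h ∈ P, Subgroup.zpowers h = Subgroup.zpowers g)
    (r : ℝ)
    (hfix : ∀ g ∈ P,
      (Set.ncard {v : M | (ρ g).val v = v} : ℝ) ≤ (p : ℝ) ^ ((n : ℝ) * (1 - 1 / r))) :
    (p : ℝ) ^ (n : ℝ) - (P.card : ℝ) * (p : ℝ) ^ ((n : ℝ) * (1 - 1 / r)) ≤
      (Nat.card G : ℝ) *
        (Set.ncard {O : Set M | ∃ v : M, (∀ g : G, (ρ g).val v = v → g = 1) ∧
          O = {w : M | ∃ g : G, (ρ g).val v = w}} : ℝ) := by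
  have : Fact p.Prime := ⟨hp⟩
  let : MulAction G M := MulAction.compHom M ρ
  have hcard : Nat.card M = p ^ n := by
    rw [Module.natCard_eq_pow_finrank (K := ZMod p), Nat.card_zmod, hn]
  have hcount : (Nat.card M : ℝ) ≤ Nat.card G * (regularOrbits G M).ncard +
      ∑ g ∈ P, ((fixedBy M g).ncard : ℝ) := by
    exact_mod_cast (card_le_ncard_regularPoints_add_sum_ncard_fixedBy hP).trans
      (Nat.add_le_add_right ncard_regularPoints_le _)
  have hsum :
      ∑ g ∈ P, ((fixedBy M g).ncard : ℝ) ≤ P.card * (p : ℝ) ^ ((n : ℝ) * (1 - 1 / r)) :=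
    (Finset.sum_le_card_nsmul P (fun g => ((fixedBy M g).ncard : ℝ)) _ hfix).trans_eq
      (nsmul_eq_mul _ _)
  rw [Real.rpow_natCast, ← Nat.cast_pow, ← hcard]
  change _ ≤ _ * ((regularOrbits G M).ncard : ℝ)
  linarith

/-- Counting lemma for regular orbits: let a finite group `G` act faithfully and linearly
on a finite `𝔽_p`-vector space `M` of dimension `n`, and let `P` be a set of generators,
one for each cyclic subgroup of prime order of `G`. If for every `g ∈ P` the fixed space
of `g` has size at most `p^(n(1-1/r))` (i.e. dimension at most `n(1-1/r)`) for some fixed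
`r ≥ 2`, then the number `R` of regular `G`-orbits on `M` satisfies
`|G| · R ≥ p^n - |P| · p^(n(1-1/r))`. -/
theorem stmt_14 (G : Type) [Group G] [Finite G]
    (p : ℕ) (hp : p.Prime)
    (M : Type) [AddCommGroup M] [Module (ZMod p) M] [Finite M]
    (n : ℕ) (hn : Module.finrank (ZMod p) M = n)
    (ρ : G →* (M →ₗ[ZMod p] M)ˣ) (hfaith : Function.Injective ρ)
    (P : Finset G)
    (hP : ∀ g : G, (∃ q : ℕ, q.Prime ∧ orderOf g = q) →
      ∃ h ∈ P, Subgroup.zpowers h = Subgroup.zpowers g)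
    (r : ℝ) (hr : 2 ≤ r)
    (hfix : ∀ g ∈ P,
      (Set.ncard {v : M | (ρ g).val v = v} : ℝ) ≤ (p : ℝ) ^ ((n : ℝ) * (1 - 1 / r))) :
    (p : ℝ) ^ (n : ℝ) - (P.card : ℝ) * (p : ℝ) ^ ((n : ℝ) * (1 - 1 / r)) ≤
      (Nat.card G : ℝ) *
        (Set.ncard {O : Set M | ∃ v : M, (∀ g : G, (ρ g).val v = v → g = 1) ∧
          O = {w : M | ∃ g : G, (ρ g).val v = w}} : ℝ) :=
  stmt_14_general G p hp M n hn ρ P hP r hfix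
end
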